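/- arXiv:0710.2039 — 4 statements merged into one kernel-verified Lean document; each statement's English description precedes it below -/
import Mathlib

section
/- Let H be a finite Borel measure on [0,1] and R(x,y) = ∫_{[0,1]} min{wx, (1−w)y} H(dw). If (x,y) ∈ (0,∞)² and H({z}) = 0 where z = y/(x+y), then R is differentiable at (x,y) with gradient (R₁(x,y), R₂(x,y))ᵀ given by R₁(x,y) = ∫_{[0,z)} w H(dw) and R₂(x,y) = ∫_{(z,1]} (1−w) H(dw). Moreover, if H satisfies the moment constraints ∫_{[0,1]} w H(dw) = ∫_{[0,1]} (1−w) H(dw) = 1, then 0 ≤ R₁(x,y) ≤ 1 and 0 ≤ R₂(x,y) ≤ 1. -/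
/-!
For `w ≠ z = y/(x+y)` the integrand `p ↦ min (w p₁) ((1-w) p₂)` is, near `(x, y)`, one of the two
linear functions `w p₁` (if `w < z`) or `(1-w) p₂` (if `w > z`), so it is differentiable there. Since
`H {z} = 0` this holds for `H`-a.e. `w`, and the integrands are `1`-Lipschitz for `w ∈ [0,1]`, so
differentiation under the integral sign gives the gradient. The bounds on `R₁, R₂` hold because
they are integrals of nonnegative functions over subsets of `[0,1]`.
-/

open MeasureTheory Set ContinuousLinearMap

theorem HasFDerivAt.min_of_lt {E : Type*} [NormedAddCommGroup E] [NormedSpace ℝ E]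
    {f g : E → ℝ} {f' : E →L[ℝ] ℝ} {a : E} (hf : HasFDerivAt f f' a) (hg : ContinuousAt g a)
    (hlt : f a < g a) : HasFDerivAt (fun p => min (f p) (g p)) f' a :=
  hf.congr_of_eventuallyEq <|
    (hf.continuousAt.eventually_lt hg hlt).mono fun _ hp => min_eq_left hp.le

theorem HasFDerivAt.min_of_gt {E : Type*} [NormedAddCommGroup E] [NormedSpace ℝ E]
    {f g : E → ℝ} {g' : E →L[ℝ] ℝ} {a : E} (hf : ContinuousAt f a) (hg : HasFDerivAt g g' a)
    (hgt : g a < f a) : HasFDerivAt (fun p => min (f p) (g p)) g' a := by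
  simpa only [min_comm] using hg.min_of_lt hf hgt

theorem lt_div_add_iff {x y w : ℝ} (hxy : 0 < x + y) : w < y / (x + y) ↔ w * x < (1 - w) * y := by
  rw [lt_div_iff₀ hxy]
  constructor <;> intro h <;> linarith

theorem div_add_lt_iff {x y w : ℝ} (hxy : 0 < x + y) : y / (x + y) < w ↔ (1 - w) * y < w * x := by
  rw [div_lt_iff₀ hxy]
  constructor <;> intro h <;> linarith

theorem lipschitzWith_min_mul {w : ℝ} (hw : w ∈ Icc (0 : ℝ) 1) :
    LipschitzWith 1 fun p : ℝ × ℝ => min (w * p.1) ((1 - w) * p.2) := by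
  refine LipschitzWith.of_dist_le_mul fun p q => ?_
  have hw₁ : |w| ≤ 1 := abs_le.mpr ⟨by linarith [hw.1], hw.2⟩
  have hw₂ : |1 - w| ≤ 1 := abs_le.mpr ⟨by linarith [hw.2], by linarith [hw.1]⟩
  rw [NNReal.coe_one, one_mul, Real.dist_eq, Prod.dist_eq, Real.dist_eq, Real.dist_eq]
  calc |min (w * p.1) ((1 - w) * p.2) - min (w * q.1) ((1 - w) * q.2)|
      ≤ max |w * p.1 - w * q.1| |(1 - w) * p.2 - (1 - w) * q.2| := abs_min_sub_min_le_max _ _ _ _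
    _ = max (|w| * |p.1 - q.1|) (|1 - w| * |p.2 - q.2|) := by simp only [← mul_sub, abs_mul]
    _ ≤ max |p.1 - q.1| |p.2 - q.2| := by
      gcongr <;> exact mul_le_of_le_one_left (abs_nonneg _) ‹_›

theorem hasFDerivAt_min_mul {x y w : ℝ} (hxy : 0 < x + y) (hw : w ≠ y / (x + y)) :
    HasFDerivAt (fun p : ℝ × ℝ => min (w * p.1) ((1 - w) * p.2))
      ((Iio (y / (x + y))).indicator id w • fst ℝ ℝ ℝ +
        (Ioi (y / (x + y))).indicator (fun w => 1 - w) w • snd ℝ ℝ ℝ) (x, y) := by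
  rcases hw.lt_or_gt with hlt | hgt
  · rw [indicator_of_mem (mem_Iio.2 hlt), indicator_of_notMem (notMem_Ioi.2 hlt.le), zero_smul, add_zero]
    exact (hasFDerivAt_fst.const_mul w).min_of_lt (by fun_prop) ((lt_div_add_iff hxy).1 hlt)
  · rw [indicator_of_notMem (notMem_Iio.2 hgt.le), indicator_of_mem (mem_Ioi.2 hgt), zero_smul, zero_add]
    exact HasFDerivAt.min_of_gt (by fun_prop) (hasFDerivAt_snd.const_mul (1 - w))
      ((div_add_lt_iff hxy).1 hgt)

section SupportedOnUnitInterval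

variable {H : Measure ℝ} (hH : ∀ᵐ w ∂H, w ∈ Icc (0 : ℝ) 1)
include hH

theorem Continuous.integrable_of_ae_mem_Icc [IsFiniteMeasure H] {f : ℝ → ℝ} (hf : Continuous f) : Integrable f H := by
  rw [← Measure.restrict_eq_self_of_ae_mem hH]
  exact hf.integrableOn_Icc

theorem Iio_ae_eq_Ico (z : ℝ) : Iio z =ᵐ[H] Ico 0 z := by
  filter_upwards [hH] with w hw
  exact propext ⟨fun h => ⟨hw.1, h⟩, And.right⟩

theorem Ioi_ae_eq_Ioc (z : ℝ) : Ioi z =ᵐ[H] Ioc z 1 := by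
  filter_upwards [hH] with w hw
  exact propext ⟨fun h => ⟨h, hw.2⟩, And.left⟩

theorem setIntegral_le_setIntegral_Icc [IsFiniteMeasure H] {f : ℝ → ℝ} (hf : Continuous f)
    (hf₀ : ∀ w ∈ Icc (0 : ℝ) 1, 0 ≤ f w) (s : Set ℝ) :
    ∫ w in s, f w ∂H ≤ ∫ w in Icc 0 1, f w ∂H := by
  rw [Measure.restrict_eq_self_of_ae_mem hH]
  exact setIntegral_le_integral (hf.integrable_of_ae_mem_Icc hH) (hH.mono hf₀)

theorem hasFDerivAt_integral_min_mul [IsFiniteMeasure H] {x y : ℝ} (hxy : 0 < x + y) (hz : H {y / (x + y)} = 0) :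
    HasFDerivAt (fun p : ℝ × ℝ => ∫ w, min (w * p.1) ((1 - w) * p.2) ∂H)
      ((∫ w in Ico 0 (y / (x + y)), w ∂H) • fst ℝ ℝ ℝ +
        (∫ w in Ioc (y / (x + y)) 1, (1 - w) ∂H) • snd ℝ ℝ ℝ) (x, y) := by
  set z := y / (x + y)
  have hint₁ : Integrable ((Iio z).indicator id) H :=
    (continuous_id.integrable_of_ae_mem_Icc hH).indicator measurableSet_Iio
  have hint₂ : Integrable ((Ioi z).indicator fun w => 1 - w) H :=
    ((continuous_const.sub continuous_id).integrable_of_ae_mem_Icc hH).indicator measurableSet_Ioi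
  have hderiv_integral : ∫ w, ((Iio z).indicator id w • fst ℝ ℝ ℝ +
      (Ioi z).indicator (fun w => 1 - w) w • snd ℝ ℝ ℝ) ∂H =
      (∫ w in Ico 0 z, w ∂H) • fst ℝ ℝ ℝ + (∫ w in Ioc z 1, (1 - w) ∂H) • snd ℝ ℝ ℝ := by
    rw [integral_add (hint₁.smul_const _) (hint₂.smul_const _), integral_smul_const,
      integral_smul_const, integral_indicator measurableSet_Iio,
      integral_indicator measurableSet_Ioi, setIntegral_congr_set (Iio_ae_eq_Ico hH z),
      setIntegral_congr_set (Ioi_ae_eq_Ioc hH z)]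
    rfl
  have hne : ∀ᵐ w ∂H, w ≠ z := measure_eq_zero_iff_ae_notMem.1 hz
  rw [← hderiv_integral]
  refine (hasFDerivAt_integral_of_dominated_loc_of_lip (𝕜 := ℝ) (bound := fun _ => 1)
    (F := fun (p : ℝ × ℝ) w => min (w * p.1) ((1 - w) * p.2)) Filter.univ_mem
    (.of_forall fun p => (by fun_prop : Continuous _).aestronglyMeasurable)
    ((by fun_prop : Continuous _).integrable_of_ae_mem_Icc hH) ?_ ?_
    (integrable_const 1) ?_).2
  · exact (hint₁.smul_const _).aestronglyMeasurable.add (hint₂.smul_const _).aestronglyMeasurable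
  · filter_upwards [hH] with w hw
    simpa using lipschitzWith_min_mul hw
  · filter_upwards [hne] with w hw
    exact hasFDerivAt_min_mul hxy hw

end SupportedOnUnitInterval

/-- Lemma 7.1 of Einmahl, Krajina, Segers (2008): differentiability of the tail copula `R`
associated with a finite spectral measure `H` on `[0,1]` at points where `H` has no atom
at `z = y/(x+y)`, together with the bounds `0 ≤ R₁, R₂ ≤ 1` under the moment constraints. -/
theorem stmt_5 (H : Measure ℝ) [IsFiniteMeasure H]
    (hsupp : H (Set.Icc (0:ℝ) 1)ᶜ = 0)
    (R : ℝ → ℝ → ℝ)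
    (hR : ∀ x y, R x y = ∫ w, min (w * x) ((1 - w) * y) ∂H)
    (x y : ℝ) (hx : 0 < x) (hy : 0 < y)
    (hz : H {y / (x + y)} = 0)
    (R₁ R₂ : ℝ)
    (hR₁ : R₁ = ∫ w in Set.Ico (0:ℝ) (y / (x + y)), w ∂H)
    (hR₂ : R₂ = ∫ w in Set.Ioc (y / (x + y)) 1, (1 - w) ∂H) :
    HasFDerivAt (fun p : ℝ × ℝ => R p.1 p.2)
      (R₁ • (ContinuousLinearMap.fst ℝ ℝ ℝ) + R₂ • (ContinuousLinearMap.snd ℝ ℝ ℝ)) (x, y) ∧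
    ((∫ w in Set.Icc (0:ℝ) 1, w ∂H = 1 ∧ ∫ w in Set.Icc (0:ℝ) 1, (1 - w) ∂H = 1) →
      0 ≤ R₁ ∧ R₁ ≤ 1 ∧ 0 ≤ R₂ ∧ R₂ ≤ 1) := by
  have hH : ∀ᵐ w ∂H, w ∈ Icc (0 : ℝ) 1 := ae_iff.2 hsupp
  subst hR₁ hR₂
  refine ⟨?_, fun ⟨hm₁, hm₂⟩ => ⟨?_, ?_, ?_, ?_⟩⟩
  · simpa only [hR] using hasFDerivAt_integral_min_mul hH (add_pos hx hy) hz
  · exact setIntegral_nonneg measurableSet_Ico fun w hw => hw.1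
  · exact (setIntegral_le_setIntegral_Icc hH continuous_id (fun w hw => hw.1) _).trans hm₁.le
  · exact setIntegral_nonneg measurableSet_Ioc fun w hw => by linarith [hw.2]
  · refine (setIntegral_le_setIntegral_Icc hH (f := fun w => 1 - w) (by fun_prop)
      (fun w hw => by linarith [hw.2]) _).trans hm₂.le
end

section
/- Let x₁,…,xₙ be distinct reals and y₁,…,yₙ be distinct reals, with ranks R_i^X of x_i among x₁,…,xₙ and R_i^Y of y_i among y₁,…,yₙ, and let k ∈ {1,…,n}. Define L̂¹(x,y) = k⁻¹ #{i : R_i^X > n+1−kx or R_i^Y > n+1−ky}, L̂²(x,y) = k⁻¹ #{i : R_i^X ≥ n+1−kx or R_i^Y ≥ n+1−ky}, and l̂(x,y) = k⁻¹ #{i : R_i^X > n+1/2−kx or R_i^Y > n+1/2−ky}. Then L̂¹(x,y) ≤ L̂²(x,y) ≤ l̂(x,y) for all (x,y) ∈ [0,∞)², and sup_{0 ≤ x,y ≤ 1} |l̂(x,y) − L̂¹(x,y)| ≤ 2/k. -/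
open Finset

lemma rank_strict {n : ℕ} (x : Fin n → ℝ) {i j : Fin n} (h : x i < x j) :
    (Finset.univ.filter (fun j' => x j' ≤ x i)).card <
      (Finset.univ.filter (fun j' => x j' ≤ x j)).card := by
  apply Finset.card_lt_card
  refine (Finset.ssubset_iff_of_subset ?_).mpr ?_
  · intro a ha
    simp only [mem_filter, mem_univ, true_and] at *
    exact ha.trans h.le
  · exact ⟨j, by simp, by simp [not_le, h]⟩

lemma rank_inj {n : ℕ} (x : Fin n → ℝ) (hx : Function.Injective x) :
    Function.Injective (fun i => (Finset.univ.filter (fun j => x j ≤ x i)).card) := by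
  intro i j hij
  by_contra hne
  have hxne : x i ≠ x j := fun h => hne (hx h)
  rcases lt_or_gt_of_ne hxne with h | h
  · exact absurd hij (ne_of_lt (rank_strict x h))
  · exact absurd hij.symm (ne_of_lt (rank_strict x h))

lemma half_count {n : ℕ} (R : Fin n → ℕ) (hR : Function.Injective R) (c : ℝ) :
    (Finset.univ.filter (fun i => c < R i ∧ ¬ (c + 1/2 < R i))).card ≤ 1 := by
  rw [Finset.card_le_one]
  intro i hi j hj
  simp only [mem_filter, mem_univ, true_and, not_lt] at hi hj
  by_contra hne
  have hRne : R i ≠ R j := fun h => hne (hR h)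
  rcases lt_or_gt_of_ne hRne with h | h
  · have : (R i : ℝ) + 1 ≤ R j := by exact_mod_cast Nat.succ_le_of_lt h
    linarith [hi.1, hj.2]
  · have : (R j : ℝ) + 1 ≤ R i := by exact_mod_cast Nat.succ_le_of_lt h
    linarith [hj.1, hi.2]

/-- Comparison of the three rank-based nonparametric estimators of the stable tail
dependence function: `L̂¹ ≤ L̂² ≤ l̂` pointwise, and `sup_{0≤x,y≤1} |l̂ - L̂¹| ≤ 2/k`. -/
theorem stmt_12 (n k : ℕ) (hk1 : 1 ≤ k) (hkn : k ≤ n)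
    (x y : Fin n → ℝ) (hx : Function.Injective x) (hy : Function.Injective y)
    (RX RY : Fin n → ℕ)
    (hRX : ∀ i, RX i = (Finset.univ.filter (fun j => x j ≤ x i)).card)
    (hRY : ∀ i, RY i = (Finset.univ.filter (fun j => y j ≤ y i)).card)
    (L1 L2 lhat : ℝ → ℝ → ℝ)
    (hL1 : ∀ u v, L1 u v = (k : ℝ)⁻¹ *
      ((Finset.univ.filter (fun i => (n : ℝ) + 1 - k * u < RX i ∨ (n : ℝ) + 1 - k * v < RY i)).card : ℝ))
    (hL2 : ∀ u v, L2 u v = (k : ℝ)⁻¹ *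
      ((Finset.univ.filter (fun i => (n : ℝ) + 1 - k * u ≤ RX i ∨ (n : ℝ) + 1 - k * v ≤ RY i)).card : ℝ))
    (hlhat : ∀ u v, lhat u v = (k : ℝ)⁻¹ *
      ((Finset.univ.filter (fun i => (n : ℝ) + 1/2 - k * u < RX i ∨ (n : ℝ) + 1/2 - k * v < RY i)).card : ℝ)) :
    (∀ u ≥ (0:ℝ), ∀ v ≥ (0:ℝ), L1 u v ≤ L2 u v ∧ L2 u v ≤ lhat u v) ∧
    (∀ u ∈ Set.Icc (0:ℝ) 1, ∀ v ∈ Set.Icc (0:ℝ) 1, |lhat u v - L1 u v| ≤ 2 / k) := by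
  have hk0 : (0:ℝ) < k := by exact_mod_cast hk1
  have hRXinj : Function.Injective RX := by
    have : RX = fun i => (Finset.univ.filter (fun j => x j ≤ x i)).card := funext hRX
    rw [this]; exact rank_inj x hx
  have hRYinj : Function.Injective RY := by
    have : RY = fun i => (Finset.univ.filter (fun j => y j ≤ y i)).card := funext hRY
    rw [this]; exact rank_inj y hy
  have hsub1 : ∀ u v : ℝ,
      (Finset.univ.filter (fun i => (n : ℝ) + 1 - k * u < RX i ∨ (n : ℝ) + 1 - k * v < RY i)) ⊆
      (Finset.univ.filter (fun i => (n : ℝ) + 1 - k * u ≤ RX i ∨ (n : ℝ) + 1 - k * v ≤ RY i)) := by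
    intro u v i hi
    simp only [mem_filter, mem_univ, true_and] at hi ⊢
    exact Or.imp le_of_lt le_of_lt hi
  have hsub2 : ∀ u v : ℝ,
      (Finset.univ.filter (fun i => (n : ℝ) + 1 - k * u ≤ RX i ∨ (n : ℝ) + 1 - k * v ≤ RY i)) ⊆
      (Finset.univ.filter (fun i => (n : ℝ) + 1/2 - k * u < RX i ∨ (n : ℝ) + 1/2 - k * v < RY i)) := by
    intro u v i hi
    simp only [mem_filter, mem_univ, true_and] at hi ⊢
    exact Or.imp (fun h => by linarith) (fun h => by linarith) hi
  constructor
  · intro u _ v _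
    refine ⟨?_, ?_⟩
    · rw [hL1, hL2]
      have := Finset.card_le_card (hsub1 u v)
      exact mul_le_mul_of_nonneg_left (by exact_mod_cast this) (by positivity)
    · rw [hL2, hlhat]
      have := Finset.card_le_card (hsub2 u v)
      exact mul_le_mul_of_nonneg_left (by exact_mod_cast this) (by positivity)
  · intro u _ v _
    set S1 := (Finset.univ.filter
      (fun i => (n : ℝ) + 1 - k * u < RX i ∨ (n : ℝ) + 1 - k * v < RY i)) with hS1
    set Sl := (Finset.univ.filter
      (fun i => (n : ℝ) + 1/2 - k * u < RX i ∨ (n : ℝ) + 1/2 - k * v < RY i)) with hSl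
    have hss : S1 ⊆ Sl := (hsub1 u v).trans (hsub2 u v)
    set A := (Finset.univ.filter
      (fun i => ((n : ℝ) + 1/2 - k * u) < RX i ∧ ¬ (((n : ℝ) + 1/2 - k * u) + 1/2 < RX i))) with hA
    set B := (Finset.univ.filter
      (fun i => ((n : ℝ) + 1/2 - k * v) < RY i ∧ ¬ (((n : ℝ) + 1/2 - k * v) + 1/2 < RY i))) with hB
    have hdiff : Sl \ S1 ⊆ A ∪ B := by
      intro i hi
      simp only [hSl, hS1, hA, hB, Finset.mem_sdiff, mem_filter, mem_univ, true_and,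
        Finset.mem_union, not_or] at hi ⊢
      obtain ⟨hl, h1x, h1y⟩ := hi
      rcases hl with h | h
      · exact Or.inl ⟨h, by intro hc; exact h1x (by linarith)⟩
      · exact Or.inr ⟨h, by intro hc; exact h1y (by linarith)⟩
    have hcard : Sl.card ≤ S1.card + 2 := by
      have h1 : (Sl \ S1).card + S1.card = Sl.card := Finset.card_sdiff_add_card_eq_card hss
      have h2 : (Sl \ S1).card ≤ A.card + B.card :=
        (Finset.card_le_card hdiff).trans (Finset.card_union_le _ _)
      have hAc : A.card ≤ 1 := by
        rw [hA]; exact half_count RX hRXinj ((n : ℝ) + 1/2 - k * u)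
      have hBc : B.card ≤ 1 := by
        rw [hB]; exact half_count RY hRYinj ((n : ℝ) + 1/2 - k * v)
      omega
    have hle : L1 u v ≤ lhat u v := by
      rw [hL1, hlhat, ← hS1, ← hSl]
      exact mul_le_mul_of_nonneg_left
        (Nat.cast_le.mpr (Finset.card_le_card hss)) (by positivity)
    have hcc : (Sl.card : ℝ) ≤ (S1.card : ℝ) + 2 := by exact_mod_cast hcard
    have h2k : (k : ℝ)⁻¹ * (Sl.card : ℝ) - (k : ℝ)⁻¹ * S1.card ≤ 2 / k := by
      rw [div_eq_inv_mul]
      calc (k : ℝ)⁻¹ * (Sl.card : ℝ) - (k : ℝ)⁻¹ * S1.card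
          = (k : ℝ)⁻¹ * ((Sl.card : ℝ) - S1.card) := by ring
        _ ≤ (k : ℝ)⁻¹ * 2 := mul_le_mul_of_nonneg_left (by linarith) (by positivity)
    rw [abs_of_nonneg (by linarith), hlhat, hL1, ← hS1, ← hSl]
    exact h2k
end

section
/- Let a, b ∈ (0,1/2), q = (1−2b)/(1−a−b), and l(x,y;a,b) = q·max{ax,(1−a)y} + (2−q)·max{(1−b)x, by}. Let Δ = {(x,y) ∈ [0,1]² : x + y ≤ 1}. Then ∬_Δ x·l(x,y;a,b) dx dy = J(a,b) and ∬_Δ y·l(x,y;a,b) dx dy = J(b,a), where J(a,b) = (1/24){(2ab − a − b)(b − a + 1) + a(b − 1) + 3}. -/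
/-!
Each max-term of `l` is handled separately. For `0 ≤ c < 1`, Fubini over `Δ` with the inner
integral in `y` cut at `y = c x / (1 - c)` (and the outer one at `x = 1 - c`, beyond which the cut
leaves the triangle) reduces `∬_Δ x · max(c x, (1 - c) y)` to polynomial integrals, giving
`(1 - c + 3c² - c³)/24`. The swap `(x, y) ↦ (y, x)` preserves `Δ` and exchanges the two moments
with `c ↦ 1 - c`, so `∬_Δ y · max(c x, (1 - c) y) = (2 - 2c + c³)/24`. Since
`max((1 - b) x, b y)` is the term with `c = 1 - b`, the theorem follows by linearity.
-/

open MeasureTheory Set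

def unitTriangle : Set (ℝ × ℝ) :=
  {p | p.1 ∈ Icc (0:ℝ) 1 ∧ p.2 ∈ Icc (0:ℝ) 1 ∧ p.1 + p.2 ≤ 1}

lemma isCompact_unitTriangle : IsCompact unitTriangle := by
  have h : unitTriangle = (Icc (0:ℝ) 1 ×ˢ Icc (0:ℝ) 1) ∩ {p | p.1 + p.2 ≤ 1} := by
    ext p; simp only [unitTriangle, mem_inter_iff, mem_prod, mem_ofPred_eq, and_assoc]
  rw [h]
  exact (isCompact_Icc.prod isCompact_Icc).inter_right
    (isClosed_le (continuous_fst.add continuous_snd) continuous_const)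

lemma measurableSet_unitTriangle : MeasurableSet unitTriangle :=
  isCompact_unitTriangle.isClosed.measurableSet

lemma preimage_swap_unitTriangle : Prod.swap ⁻¹' unitTriangle = unitTriangle := by
  ext p
  simp only [unitTriangle, mem_preimage, mem_ofPred_eq, Prod.fst_swap, Prod.snd_swap]
  constructor <;> rintro ⟨h1, h2, h3⟩ <;> exact ⟨h2, h1, by linarith⟩

lemma setIntegral_unitTriangle_comp_swap (f : ℝ × ℝ → ℝ) :
    ∫ p in unitTriangle, f p.swap = ∫ p in unitTriangle, f p := by
  have h := (Measure.measurePreserving_swap (μ := (volume : Measure ℝ)) (ν := volume)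
    ).setIntegral_preimage_emb MeasurableEquiv.prodComm.measurableEmbedding f unitTriangle
  rwa [← Measure.volume_eq_prod, preimage_swap_unitTriangle] at h

lemma indicator_unitTriangle {x : ℝ} (hx : x ∈ Icc 0 1) (f : ℝ × ℝ → ℝ) (y : ℝ) :
    unitTriangle.indicator f (x, y) = (Icc 0 (1 - x)).indicator (fun y => f (x, y)) y := by
  by_cases hy : y ∈ Icc 0 (1 - x)
  · rw [indicator_of_mem hy, indicator_of_mem]
    exact ⟨hx, ⟨hy.1, by linarith [hy.2, hx.1]⟩, by linarith [hy.2]⟩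
  · rw [indicator_of_notMem hy, indicator_of_notMem]
    rintro ⟨-, ⟨hy0, -⟩, hxy⟩
    exact hy ⟨hy0, by linarith⟩

lemma setIntegral_unitTriangle {f : ℝ × ℝ → ℝ} (hf : Continuous f) :
    ∫ p in unitTriangle, f p = ∫ x in (0:ℝ)..1, ∫ y in (0:ℝ)..(1 - x), f (x, y) := by
  have hint : Integrable (unitTriangle.indicator f) (volume.prod volume) := by
    rw [← Measure.volume_eq_prod, integrable_indicator_iff measurableSet_unitTriangle]
    exact hf.continuousOn.integrableOn_compact isCompact_unitTriangle
  have hslice : (fun x => ∫ y, unitTriangle.indicator f (x, y)) =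
      (Icc 0 1).indicator (fun x => ∫ y in (0:ℝ)..(1 - x), f (x, y)) := by
    funext x
    by_cases hx : x ∈ Icc (0:ℝ) 1
    · simp_rw [indicator_unitTriangle hx, integral_indicator measurableSet_Icc,
        indicator_of_mem hx, integral_Icc_eq_integral_Ioc,
        intervalIntegral.integral_of_le (by linarith [hx.2] : 0 ≤ 1 - x)]
    · have hzero : ∀ y, unitTriangle.indicator f (x, y) = 0 := fun y =>
        indicator_of_notMem (fun h => hx h.1) f
      simp_rw [hzero, indicator_of_notMem hx, integral_zero]
  rw [← integral_indicator measurableSet_unitTriangle, Measure.volume_eq_prod,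
    integral_prod _ hint, hslice, integral_indicator measurableSet_Icc,
    integral_Icc_eq_integral_Ioc, intervalIntegral.integral_of_le zero_le_one]

lemma integral_max_const_mul_of_le {A B t : ℝ} (hA : 0 ≤ A) (hB : 0 < B) (ht : A ≤ B * t) :
    ∫ y in (0:ℝ)..t, max A (B * y) = A ^ 2 / (2 * B) + B * t ^ 2 / 2 := by
  have hcont : Continuous fun y => max A (B * y) := by fun_prop
  have hB' : B ≠ 0 := hB.ne'
  have hy₀ : 0 ≤ A / B := by positivity
  have hy₀t : A / B ≤ t := by rwa [div_le_iff₀' hB]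
  rw [← intervalIntegral.integral_add_adjacent_intervals (b := A / B)
    (hcont.intervalIntegrable _ _) (hcont.intervalIntegrable _ _)]
  have hlow : ∫ y in (0:ℝ)..A / B, max A (B * y) = ∫ y in (0:ℝ)..A / B, A := by
    refine intervalIntegral.integral_congr fun y hy => max_eq_left ?_
    rw [uIcc_of_le hy₀] at hy
    calc B * y ≤ B * (A / B) := by gcongr; exact hy.2
      _ = A := by field_simp
  have hhigh : ∫ y in A / B..t, max A (B * y) = ∫ y in A / B..t, B * y := by
    refine intervalIntegral.integral_congr fun y hy => max_eq_right ?_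
    rw [uIcc_of_le hy₀t] at hy
    calc A = B * (A / B) := by field_simp
      _ ≤ B * y := by gcongr; exact hy.1
  rw [hlow, hhigh, intervalIntegral.integral_const, intervalIntegral.integral_const_mul,
    integral_id, smul_eq_mul]
  field_simp
  ring

lemma integral_max_const_mul_of_ge {A B t : ℝ} (hB : 0 ≤ B) (ht : 0 ≤ t) (h : B * t ≤ A) :
    ∫ y in (0:ℝ)..t, max A (B * y) = A * t := by
  have hconst : ∫ y in (0:ℝ)..t, max A (B * y) = ∫ y in (0:ℝ)..t, A := by
    refine intervalIntegral.integral_congr fun y hy => max_eq_left ?_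
    rw [uIcc_of_le ht] at hy
    nlinarith [hy.2]
  rw [hconst, intervalIntegral.integral_const, smul_eq_mul]
  ring

lemma integral_cubic (A B C D a b : ℝ) :
    ∫ x in a..b, (A * x ^ 3 + B * x ^ 2 + C * x + D) =
      (A * b ^ 4 / 4 + B * b ^ 3 / 3 + C * b ^ 2 / 2 + D * b) -
        (A * a ^ 4 / 4 + B * a ^ 3 / 3 + C * a ^ 2 / 2 + D * a) := by
  have hderiv : ∀ x ∈ uIcc a b, HasDerivAt
      (fun x : ℝ => A * x ^ 4 / 4 + B * x ^ 3 / 3 + C * x ^ 2 / 2 + D * x)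
      (A * x ^ 3 + B * x ^ 2 + C * x + D) x := by
    intro x _
    refine (((((hasDerivAt_pow 4 x).const_mul A).div_const 4).add
      (((hasDerivAt_pow 3 x).const_mul B).div_const 3)).add
      (((hasDerivAt_pow 2 x).const_mul C).div_const 2)).add
      ((hasDerivAt_id' x).const_mul D) |>.congr_deriv ?_
    norm_num
    ring
  exact intervalIntegral.integral_eq_sub_of_hasDerivAt hderiv
    ((by fun_prop : Continuous fun x : ℝ => A * x ^ 3 + B * x ^ 2 + C * x + D
      ).intervalIntegrable _ _)

lemma setIntegral_unitTriangle_fst_mul_max {c : ℝ} (hc0 : 0 ≤ c) (hc1 : c < 1) :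
    ∫ p in unitTriangle, p.1 * max (c * p.1) ((1 - c) * p.2) =
      (1 - c + 3 * c ^ 2 - c ^ 3) / 24 := by
  have h1c : 0 < 1 - c := by linarith
  rw [setIntegral_unitTriangle (by fun_prop)]
  simp_rw [intervalIntegral.integral_const_mul]
  have hcont : Continuous fun x : ℝ => x * ∫ y in (0:ℝ)..(1 - x), max (c * x) ((1 - c) * y) :=
    continuous_id.mul (intervalIntegral.continuous_parametric_intervalIntegral_of_continuous
      (by fun_prop) (by fun_prop))
  rw [← intervalIntegral.integral_add_adjacent_intervals (b := 1 - c)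
    (hcont.intervalIntegrable _ _) (hcont.intervalIntegrable _ _)]
  have hlow : ∫ x in (0:ℝ)..(1 - c), x * ∫ y in (0:ℝ)..(1 - x), max (c * x) ((1 - c) * y) =
      ∫ x in (0:ℝ)..(1 - c), ((c ^ 2 / (2 * (1 - c)) + (1 - c) / 2) * x ^ 3 +
        (-(1 - c)) * x ^ 2 + (1 - c) / 2 * x + 0) := by
    refine intervalIntegral.integral_congr fun x hx => ?_
    rw [uIcc_of_le h1c.le] at hx
    rw [integral_max_const_mul_of_le (by nlinarith [hx.1]) h1c (by nlinarith [hx.2])]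
    field_simp
    ring
  have hhigh : ∫ x in (1 - c)..1, x * ∫ y in (0:ℝ)..(1 - x), max (c * x) ((1 - c) * y) =
      ∫ x in (1 - c)..1, (-c * x ^ 3 + c * x ^ 2 + 0 * x + 0) := by
    refine intervalIntegral.integral_congr fun x hx => ?_
    rw [uIcc_of_le (by linarith)] at hx
    rw [integral_max_const_mul_of_ge h1c.le (by linarith [hx.2]) (by nlinarith [hx.1])]
    ring
  rw [hlow, hhigh, integral_cubic, integral_cubic]
  field_simp
  ring

lemma setIntegral_unitTriangle_snd_mul_max {c : ℝ} (hc0 : 0 < c) (hc1 : c ≤ 1) :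
    ∫ p in unitTriangle, p.2 * max (c * p.1) ((1 - c) * p.2) = (2 - 2 * c + c ^ 3) / 24 := by
  calc ∫ p in unitTriangle, p.2 * max (c * p.1) ((1 - c) * p.2)
      = ∫ p in unitTriangle, p.swap.1 * max ((1 - c) * p.swap.1) ((1 - (1 - c)) * p.swap.2) := by
        congr 1
        ext p
        simp only [Prod.fst_swap, Prod.snd_swap, sub_sub_cancel, max_comm]
    _ = (2 - 2 * c + c ^ 3) / 24 := by
        rw [setIntegral_unitTriangle_comp_swap
            (fun p => p.1 * max ((1 - c) * p.1) ((1 - (1 - c)) * p.2)),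
          setIntegral_unitTriangle_fst_mul_max (by linarith) (by linarith)]
        ring

lemma setIntegral_unitTriangle_mul_add_max {g : ℝ × ℝ → ℝ} (hg : Continuous g)
    (q r c d : ℝ) :
    ∫ p in unitTriangle,
        g p * (q * max (c * p.1) ((1 - c) * p.2) + r * max (d * p.1) ((1 - d) * p.2)) =
      q * (∫ p in unitTriangle, g p * max (c * p.1) ((1 - c) * p.2)) +
        r * ∫ p in unitTriangle, g p * max (d * p.1) ((1 - d) * p.2) := by
  have hint (e : ℝ) :
      IntegrableOn (fun p : ℝ × ℝ => g p * max (e * p.1) ((1 - e) * p.2)) unitTriangle :=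
    (by fun_prop : Continuous _).continuousOn.integrableOn_compact isCompact_unitTriangle
  rw [← integral_const_mul, ← integral_const_mul,
    ← integral_add ((hint c).const_mul q) ((hint d).const_mul r)]
  congr 1
  ext p
  ring

/-- Moments of the stable tail dependence function of the two-point spectral measure over
the triangle `Δ = {(x,y) ∈ [0,1]² : x + y ≤ 1}`:
`∬_Δ x·l(x,y;a,b) dx dy = J(a,b)` and `∬_Δ y·l(x,y;a,b) dx dy = J(b,a)`, where
`J(a,b) = (1/24){(2ab - a - b)(b - a + 1) + a(b-1) + 3}`. -/
theorem stmt_16 (l : ℝ → ℝ → ℝ → ℝ → ℝ)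
    (hl : ∀ a b x y, l a b x y =
      ((1 - 2*b) / (1 - a - b)) * max (a * x) ((1 - a) * y) +
        (2 - (1 - 2*b) / (1 - a - b)) * max ((1 - b) * x) (b * y))
    (J : ℝ → ℝ → ℝ)
    (hJ : ∀ a b, J a b = (1/24) * ((2*a*b - a - b) * (b - a + 1) + a * (b - 1) + 3))
    (a b : ℝ) (ha : a ∈ Set.Ioo (0:ℝ) (1/2)) (hb : b ∈ Set.Ioo (0:ℝ) (1/2)) :
    (∫ p in {p : ℝ × ℝ | p.1 ∈ Set.Icc (0:ℝ) 1 ∧ p.2 ∈ Set.Icc (0:ℝ) 1 ∧ p.1 + p.2 ≤ 1},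
        p.1 * l a b p.1 p.2) = J a b ∧
    (∫ p in {p : ℝ × ℝ | p.1 ∈ Set.Icc (0:ℝ) 1 ∧ p.2 ∈ Set.Icc (0:ℝ) 1 ∧ p.1 + p.2 ≤ 1},
        p.2 * l a b p.1 p.2) = J b a := by
  obtain ⟨ha0, ha1⟩ := ha
  obtain ⟨hb0, hb1⟩ := hb
  have hab : 1 - a - b ≠ 0 := by linarith
  have hl' (x y : ℝ) : l a b x y = (1 - 2*b) / (1 - a - b) * max (a * x) ((1 - a) * y) +
      (2 - (1 - 2*b) / (1 - a - b)) * max ((1 - b) * x) ((1 - (1 - b)) * y) := by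
    rw [hl, sub_sub_cancel]
  change (∫ p in unitTriangle, _) = _ ∧ (∫ p in unitTriangle, _) = _
  simp_rw [hl']
  rw [setIntegral_unitTriangle_mul_add_max continuous_fst,
    setIntegral_unitTriangle_mul_add_max continuous_snd,
    setIntegral_unitTriangle_fst_mul_max ha0.le (by linarith),
    setIntegral_unitTriangle_fst_mul_max (by linarith) (by linarith),
    setIntegral_unitTriangle_snd_mul_max ha0 (by linarith),
    setIntegral_unitTriangle_snd_mul_max (by linarith) (by linarith), hJ, hJ]
  constructor <;> field_simp <;> ring
end

section
/- Let a, b ∈ (0,1/2), and set J = J(a,b) and K = J(b,a), where J(a,b) = (1/24){(2ab − a − b)(b − a + 1) + a(b − 1) + 3}. Put c_J = 3(8J − 1) and c_K = 3(8K − 1). Then b is a root of the quadratic equation 3(2c_J + 2c_K + 3)b² + 3(−5c_J + c_K − 3)b + 3c_J − 6c_K − (c_J + c_K)² = 0, and a = (3b + c_J + c_K)/(6b − 3). -/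
theorem stmt_17_general (J : ℝ → ℝ → ℝ)
    (hJ : ∀ a b, J a b = (1/24) * ((2*a*b - a - b) * (b - a + 1) + a * (b - 1) + 3))
    (a b : ℝ) (hb : b ∈ Set.Ioo (0:ℝ) (1/2))
    (cJ cK : ℝ) (hcJ : cJ = 3 * (8 * J a b - 1)) (hcK : cK = 3 * (8 * J b a - 1)) :
    3 * (2*cJ + 2*cK + 3) * b^2 + 3 * (-5*cJ + cK - 3) * b +
        3*cJ - 6*cK - (cJ + cK)^2 = 0 ∧
    a = (3*b + cJ + cK) / (6*b - 3) := by
  -- The terms quadratic in `a` cancel in the sum `c_J + c_K`.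
  have hsum : cJ + cK = a * (6*b - 3) - 3*b := by
    rw [hcJ, hcK, hJ, hJ]
    ring
  have hden : 6*b - 3 ≠ 0 := by linarith [hb.2]
  refine ⟨by rw [hcJ, hcK, hJ, hJ]; ring, ?_⟩
  rw [eq_div_iff hden]
  linarith

/-- Inversion of the moment equations in the natural model: with `J = J(a,b)`,
`K = J(b,a)`, `c_J = 3(8J - 1)` and `c_K = 3(8K - 1)`, the parameter `b` solves the
quadratic equation
`3(2c_J + 2c_K + 3)b² + 3(-5c_J + c_K - 3)b + 3c_J - 6c_K - (c_J + c_K)² = 0`,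
and `a = (3b + c_J + c_K)/(6b - 3)`. -/
theorem stmt_17 (J : ℝ → ℝ → ℝ)
    (hJ : ∀ a b, J a b = (1/24) * ((2*a*b - a - b) * (b - a + 1) + a * (b - 1) + 3))
    (a b : ℝ) (ha : a ∈ Set.Ioo (0:ℝ) (1/2)) (hb : b ∈ Set.Ioo (0:ℝ) (1/2))
    (cJ cK : ℝ) (hcJ : cJ = 3 * (8 * J a b - 1)) (hcK : cK = 3 * (8 * J b a - 1)) :
    3 * (2*cJ + 2*cK + 3) * b^2 + 3 * (-5*cJ + cK - 3) * b +
        3*cJ - 6*cK - (cJ + cK)^2 = 0 ∧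
    a = (3*b + cJ + cK) / (6*b - 3) :=
  stmt_17_general J hJ a b hb cJ cK hcJ hcK
end
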